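/- Let D be a bounded domain and suppose u₁, u₂ are bounded continuous maximal functions in a cone C of subharmonic-type functions on D with the same boundary values: for every ξ ∈ ∂D \ K, lim_{z→ξ} u₁(z) = lim_{z→ξ} u₂(z) = φ(ξ). Assume there exists v ∈ C with v ≤ 0 on D, v > -∞ on D, and lim_{z→ξ} v(z) = -∞ for all ξ ∈ K. If maximality means that for every open U relatively compact in D and every w ∈ C with w ≤ u_i on D \ U one has w ≤ u_i on U, and C is closed under addition and under the gluing operation, then u₁ = u₂ on D. -/

import Mathlib

/-!
Fix `ε > 0` and compare `w = u₁ + ε v - ε`, which lies in the cone, with `u₂`. Near a point of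
`K` the term `ε v` tends to `-∞` and beats the bounds on `u₁, u₂`; near any other boundary point
`u₁ - u₂ → 0` while `ε v - ε ≤ -ε`. So `w ≤ u₂` off a compact subset of `D`, hence on a
neighbourhood of it with compact closure, and maximality of `u₂` gives `w ≤ u₂` on all of `D`.
Letting `ε → 0` yields `u₁ ≤ u₂`, and the argument is symmetric.
-/

open Filter Topology Bornology Set

def IsMaximalOn {X : Type*} [TopologicalSpace X] (C : Set (X → ℝ)) (D : Set X) (u : X → ℝ) :
    Prop :=
  ∀ U : Set X, IsOpen U → closure U ⊆ D → IsCompact (closure U) →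
    ∀ w ∈ C, (∀ x ∈ D \ U, w x ≤ u x) → ∀ x ∈ U, w x ≤ u x

theorem add_mul_sub_mem_of_cone {X : Type*} {C : Set (X → ℝ)}
    (hC_add : ∀ u ∈ C, ∀ w ∈ C, u + w ∈ C)
    (hC_smul : ∀ u ∈ C, ∀ c : ℝ, 0 ≤ c → c • u ∈ C)
    (hC_const : ∀ u ∈ C, ∀ c : ℝ, (fun x => u x + c) ∈ C)
    {u v : X → ℝ} (hu : u ∈ C) (hv : v ∈ C) {ε : ℝ} (hε : 0 ≤ ε) :
    (fun x => u x + ε * v x - ε) ∈ C := by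
  simpa [sub_eq_add_neg] using hC_const _ (hC_add u hu _ (hC_smul v hv ε hε)) (-ε)

section BoundaryEstimates

variable {X : Type*} {l : Filter X} {a b v : X → ℝ} {ε : ℝ}

theorem eventually_add_mul_sub_le_of_tendsto_atBot {Ma Mb : ℝ}
    (ha : ∀ᶠ x in l, |a x| ≤ Ma) (hb : ∀ᶠ x in l, |b x| ≤ Mb)
    (hv : Tendsto v l atBot) (hε : 0 < ε) :
    ∀ᶠ x in l, a x + ε * v x - ε ≤ b x := by
  filter_upwards [ha, hb, hv.eventually_le_atBot (-(Ma + Mb) / ε)] with x hax hbx hvx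
  have hεv : ε * v x ≤ -(Ma + Mb) := by
    calc ε * v x ≤ ε * (-(Ma + Mb) / ε) := mul_le_mul_of_nonneg_left hvx hε.le
      _ = -(Ma + Mb) := by field_simp
  rw [abs_le] at hax hbx
  linarith

theorem eventually_add_mul_sub_le_of_tendsto_nhds {c : ℝ}
    (ha : Tendsto a l (𝓝 c)) (hb : Tendsto b l (𝓝 c))
    (hv : ∀ᶠ x in l, v x ≤ 0) (hε : 0 < ε) :
    ∀ᶠ x in l, a x + ε * v x - ε ≤ b x := by
  have hab : Tendsto (fun x => a x - b x) l (𝓝 0) := by simpa using ha.sub hb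
  filter_upwards [hab.eventually_lt_const hε, hv] with x hx hvx
  linarith [mul_nonpos_of_nonneg_of_nonpos hε.le hvx]

end BoundaryEstimates

theorem le_of_isMaximalOn_of_eventually_le {X : Type*} [TopologicalSpace X] [RegularSpace X]
    {C : Set (X → ℝ)} {D : Set X} (hD : IsOpen D) (hDc : IsCompact (closure D))
    {u w : X → ℝ} (hu : IsMaximalOn C D u) (hw : w ∈ C)
    (hbdry : ∀ ξ ∈ frontier D, ∀ᶠ x in 𝓝[D] ξ, w x ≤ u x) :
    ∀ x ∈ D, w x ≤ u x := by
  set S := {x | ∀ᶠ y in 𝓝 x, y ∈ D → w y ≤ u y}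
  have hS : IsOpen S := isOpen_setOfPred_eventually_nhds
  have hfrS : frontier D ⊆ S := fun ξ hξ => eventually_nhdsWithin_iff.1 (hbdry ξ hξ)
  have hFD : closure D \ S ⊆ D := fun x hx => by
    by_contra hxD
    exact hx.2 (hfrS (hD.frontier_eq ▸ ⟨hx.1, hxD⟩))
  obtain ⟨U, hU, hFU, hUD⟩ :=
    (hDc.diff hS).exists_isOpen_closure_subset (hD.mem_nhdsSet.2 hFD)
  have hUc : IsCompact (closure U) :=
    hDc.of_isClosed_subset isClosed_closure (hUD.trans subset_closure)
  have houtside : ∀ x ∈ D \ U, w x ≤ u x := fun x hx => by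
    have hxS : x ∈ S := by_contra fun hxS => hx.2 (hFU ⟨subset_closure hx.1, hxS⟩)
    exact hxS.self_of_nhds hx.1
  intro x hx
  by_cases hxU : x ∈ U
  · exact hu U hU hUD hUc w hw houtside x hxU
  · exact houtside x ⟨hx, hxU⟩

theorem le_of_forall_pos_add_mul_sub_le {a b v : ℝ} (h : ∀ ε > 0, a + ε * v - ε ≤ b) : a ≤ b := by
  have hlim : Tendsto (fun ε : ℝ => a + ε * v - ε) (𝓝[>] 0) (𝓝 (a + 0 * v - 0)) :=
    (Continuous.tendsto (by fun_prop) 0).mono_left nhdsWithin_le_nhds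
  rw [zero_mul, add_zero, sub_zero] at hlim
  exact le_of_tendsto hlim (eventually_nhdsWithin_of_forall h)

theorem le_of_isMaximalOn_of_tendsto {X : Type*} [TopologicalSpace X] [RegularSpace X]
    {C : Set (X → ℝ)} {D K : Set X} (hD : IsOpen D) (hDc : IsCompact (closure D))
    {φ a b v : X → ℝ} (hb : IsMaximalOn C D b) (hw : ∀ ε > 0, (fun x => a x + ε * v x - ε) ∈ C)
    (ha_bdd : ∃ M : ℝ, ∀ x ∈ D, |a x| ≤ M) (hb_bdd : ∃ M : ℝ, ∀ x ∈ D, |b x| ≤ M)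
    (hv_np : ∀ x ∈ D, v x ≤ 0) (hv_K : ∀ ξ ∈ K, Tendsto v (𝓝[D] ξ) atBot)
    (ha_lim : ∀ ξ ∈ frontier D \ K, Tendsto a (𝓝[D] ξ) (𝓝 (φ ξ)))
    (hb_lim : ∀ ξ ∈ frontier D \ K, Tendsto b (𝓝[D] ξ) (𝓝 (φ ξ))) :
    ∀ x ∈ D, a x ≤ b x := by
  obtain ⟨Ma, hMa⟩ := ha_bdd
  obtain ⟨Mb, hMb⟩ := hb_bdd
  intro x hx
  refine le_of_forall_pos_add_mul_sub_le (v := v x) fun ε hε => ?_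
  refine le_of_isMaximalOn_of_eventually_le hD hDc hb (hw ε hε) (fun ξ hξ => ?_) x hx
  by_cases hξK : ξ ∈ K
  · exact eventually_add_mul_sub_le_of_tendsto_atBot (eventually_nhdsWithin_of_forall hMa)
      (eventually_nhdsWithin_of_forall hMb) (hv_K ξ hξK) hε
  · exact eventually_add_mul_sub_le_of_tendsto_nhds (ha_lim ξ ⟨hξ, hξK⟩) (hb_lim ξ ⟨hξ, hξK⟩)
      (eventually_nhdsWithin_of_forall hv_np) hε

theorem stmt_14_general {n : ℕ} (D : Set (EuclideanSpace ℂ (Fin n)))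
    (hD_open : IsOpen D) (hD_bdd : IsBounded D)
    (K : Set (EuclideanSpace ℂ (Fin n)))
    (φ : EuclideanSpace ℂ (Fin n) → ℝ)
    (C : Set (EuclideanSpace ℂ (Fin n) → ℝ))
    (hC_add : ∀ u ∈ C, ∀ w ∈ C, u + w ∈ C)
    (hC_smul : ∀ u ∈ C, ∀ c : ℝ, 0 ≤ c → c • u ∈ C)
    (hC_const : ∀ u ∈ C, ∀ c : ℝ, (fun x => u x + c) ∈ C)
    (u₁ u₂ v : EuclideanSpace ℂ (Fin n) → ℝ)
    (hu₁C : u₁ ∈ C) (hu₂C : u₂ ∈ C) (hvC : v ∈ C)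
    (hv_np : ∀ x ∈ D, v x ≤ 0)
    (hv_K : ∀ ξ ∈ K, Tendsto v (nhdsWithin ξ D) atBot)
    (hu₁_bdd : ∃ M : ℝ, ∀ x ∈ D, |u₁ x| ≤ M)
    (hu₂_bdd : ∃ M : ℝ, ∀ x ∈ D, |u₂ x| ≤ M)
    (hmax : ∀ u ∈ ({u₁, u₂} : Set (EuclideanSpace ℂ (Fin n) → ℝ)),
      ∀ U : Set (EuclideanSpace ℂ (Fin n)), IsOpen U → closure U ⊆ D →
        IsCompact (closure U) →
        ∀ w ∈ C, (∀ x ∈ D \ U, w x ≤ u x) → ∀ x ∈ U, w x ≤ u x)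
    (hbdry : ∀ ξ ∈ frontier D \ K,
      Tendsto u₁ (nhdsWithin ξ D) (nhds (φ ξ)) ∧
      Tendsto u₂ (nhdsWithin ξ D) (nhds (φ ξ))) :
    Set.EqOn u₁ u₂ D := by
  have hDc : IsCompact (closure D) := hD_bdd.isCompact_closure
  have hcomb : ∀ u ∈ C, ∀ ε > 0, (fun x => u x + ε * v x - ε) ∈ C := fun u hu ε hε =>
    add_mul_sub_mem_of_cone hC_add hC_smul hC_const hu hvC hε.le
  have hu₁_lim := fun ξ hξ => (hbdry ξ hξ).1
  have hu₂_lim := fun ξ hξ => (hbdry ξ hξ).2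
  intro x hx
  apply le_antisymm
  · exact le_of_isMaximalOn_of_tendsto hD_open hDc (hmax u₂ (by simp)) (hcomb u₁ hu₁C)
      hu₁_bdd hu₂_bdd hv_np hv_K hu₁_lim hu₂_lim x hx
  · exact le_of_isMaximalOn_of_tendsto hD_open hDc (hmax u₁ (by simp)) (hcomb u₂ hu₂C)
      hu₂_bdd hu₁_bdd hv_np hv_K hu₂_lim hu₁_lim x hx

/-- Uniqueness of bounded continuous maximal functions with prescribed boundary values
off a compact exceptional set `K ⊂ ∂D`, given an auxiliary function `v ∈ C`, `v ≤ 0`,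
finite on `D`, tending to `-∞` at every point of `K`. -/
theorem stmt_14 {n : ℕ} (D : Set (EuclideanSpace ℂ (Fin n)))
    (hD_open : IsOpen D) (hD_conn : IsConnected D) (hD_bdd : IsBounded D)
    (K : Set (EuclideanSpace ℂ (Fin n))) (hK_cpt : IsCompact K) (hK_sub : K ⊆ frontier D)
    (φ : EuclideanSpace ℂ (Fin n) → ℝ) (hφ : ContinuousOn φ (frontier D))
    (C : Set (EuclideanSpace ℂ (Fin n) → ℝ))
    (hC_usc : ∀ u ∈ C, UpperSemicontinuousOn u D)
    (hC_add : ∀ u ∈ C, ∀ w ∈ C, u + w ∈ C)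
    (hC_smul : ∀ u ∈ C, ∀ c : ℝ, 0 ≤ c → c • u ∈ C)
    (hC_const : ∀ u ∈ C, ∀ c : ℝ, (fun x => u x + c) ∈ C)
    (hC_max : ∀ u ∈ C, ∀ w ∈ C, (fun x => max (u x) (w x)) ∈ C)
    (u₁ u₂ v : EuclideanSpace ℂ (Fin n) → ℝ)
    (hu₁C : u₁ ∈ C) (hu₂C : u₂ ∈ C) (hvC : v ∈ C)
    (hv_np : ∀ x ∈ D, v x ≤ 0)
    (hv_K : ∀ ξ ∈ K, Tendsto v (nhdsWithin ξ D) atBot)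
    (hcomb : ∀ ε : ℝ, 0 < ε → (fun x => u₁ x + ε * v x - ε) ∈ C)
    (hu₁_bdd : ∃ M : ℝ, ∀ x ∈ D, |u₁ x| ≤ M)
    (hu₂_bdd : ∃ M : ℝ, ∀ x ∈ D, |u₂ x| ≤ M)
    (hu₁_cont : ContinuousOn u₁ D) (hu₂_cont : ContinuousOn u₂ D)
    (hmax : ∀ u ∈ ({u₁, u₂} : Set (EuclideanSpace ℂ (Fin n) → ℝ)),
      ∀ U : Set (EuclideanSpace ℂ (Fin n)), IsOpen U → closure U ⊆ D →
        IsCompact (closure U) →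
        ∀ w ∈ C, (∀ x ∈ D \ U, w x ≤ u x) → ∀ x ∈ U, w x ≤ u x)
    (hbdry : ∀ ξ ∈ frontier D \ K,
      Tendsto u₁ (nhdsWithin ξ D) (nhds (φ ξ)) ∧
      Tendsto u₂ (nhdsWithin ξ D) (nhds (φ ξ))) :
    Set.EqOn u₁ u₂ D :=
  stmt_14_general D hD_open hD_bdd K φ C hC_add hC_smul hC_const u₁ u₂ v hu₁C hu₂C hvC hv_np hv_K
    hu₁_bdd hu₂_bdd hmax hbdry
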